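/- Let p ≥ 2, λ ≥ 0, α ≥ 0, and |η| ≥ |ξ| > λ. Then |𝒱_{α,λ}(ξ) − 𝒱_{α,λ}(η)| ≤ (2/p)||H_{p/2}(η)| − |H_{p/2}(ξ)|| + 4 (|η|−λ)^(p/2)/(p|η|) · |ξ − η|. -/

import Mathlib

/-!
The integrand of `Gfun` is at most `ω ^ (p / 2 - 1)`, so `Gfun` is increasing and its increments
are dominated by those of `(2 / p) t ^ (p / 2)`, i.e. by those of `(2 / p) ‖Hfun‖`. Splitting
`Vfun ξ - Vfun η` into the radial part `(Gfun a - Gfun b) ξ / ‖ξ‖`, with `a = ‖ξ‖ - λ` and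
`b = ‖η‖ - λ`, and `Gfun b` times the difference of the unit vectors `ξ / ‖ξ‖ - η / ‖η‖`,
whose norm is at most `2 ‖ξ - η‖ / ‖η‖` when `‖ξ‖ ≤ ‖η‖`, gives the two terms of the bound.
-/

open Classical in
noncomputable def Hfun (n : ℕ) (lam γ : ℝ) (ξ : EuclideanSpace ℝ (Fin n)) :
    EuclideanSpace ℝ (Fin n) :=
  if ξ = 0 then 0 else ((max (‖ξ‖ - lam) 0) ^ γ / ‖ξ‖) • ξ

noncomputable def Gfun (p α lam t : ℝ) : ℝ :=
  ∫ ω in (0:ℝ)..t, ω ^ ((p - 1 + 2 * α) / 2) / (ω + lam) ^ ((1 + 2 * α) / 2)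

noncomputable def Vfun (n : ℕ) (p α lam : ℝ) (ξ : EuclideanSpace ℝ (Fin n)) :
    EuclideanSpace ℝ (Fin n) :=
  if lam < ‖ξ‖ then (Gfun p α lam (max (‖ξ‖ - lam) 0) / ‖ξ‖) • ξ else 0

open intervalIntegral

lemma rpow_add_div_add_rpow_le {ω lam γ β : ℝ} (hω : 0 < ω) (hlam : 0 ≤ lam) (hβ : 0 ≤ β) :
    ω ^ (γ + β) / (ω + lam) ^ β ≤ ω ^ γ := by
  rw [Real.rpow_add hω, div_le_iff₀ (by positivity)]
  gcongr
  linarith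

section Gfun

variable {p α lam : ℝ}

lemma intervalIntegrable_Gfun_integrand (hp : 0 < p) (hlam : 0 ≤ lam) (hα : 0 ≤ 1 + 2 * α)
    {a b : ℝ} (ha : 0 ≤ a) (hb : 0 ≤ b) :
    IntervalIntegrable (fun ω => ω ^ ((p - 1 + 2 * α) / 2) / (ω + lam) ^ ((1 + 2 * α) / 2))
      MeasureTheory.volume a b := by
  refine (intervalIntegrable_rpow' (r := p / 2 - 1) (by linarith)).mono_fun'
    (Measurable.aestronglyMeasurable (by fun_prop)) ?_
  filter_upwards [MeasureTheory.ae_restrict_mem measurableSet_uIoc] with ω hω_mem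
  have hω : 0 < ω := (le_min ha hb).trans_lt hω_mem.1
  rw [Real.norm_of_nonneg (by positivity)]
  convert rpow_add_div_add_rpow_le hω hlam (by linarith : 0 ≤ (1 + 2 * α) / 2) using 3
  ring

lemma Gfun_sub_Gfun (hp : 0 < p) (hlam : 0 ≤ lam) (hα : 0 ≤ 1 + 2 * α) {a b : ℝ}
    (ha : 0 ≤ a) (hb : 0 ≤ b) :
    Gfun p α lam b - Gfun p α lam a =
      ∫ ω in a..b, ω ^ ((p - 1 + 2 * α) / 2) / (ω + lam) ^ ((1 + 2 * α) / 2) :=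
  integral_interval_sub_left (intervalIntegrable_Gfun_integrand hp hlam hα le_rfl hb)
    (intervalIntegrable_Gfun_integrand hp hlam hα le_rfl ha)

lemma Gfun_le_Gfun (hp : 0 < p) (hlam : 0 ≤ lam) (hα : 0 ≤ 1 + 2 * α) {a b : ℝ}
    (ha : 0 ≤ a) (hab : a ≤ b) : Gfun p α lam a ≤ Gfun p α lam b := by
  rw [← sub_nonneg, Gfun_sub_Gfun hp hlam hα ha (ha.trans hab)]
  exact integral_nonneg hab fun ω hω => by
    have : 0 ≤ ω := ha.trans hω.1
    positivity

lemma Gfun_sub_Gfun_le (hp : 0 < p) (hlam : 0 ≤ lam) (hα : 0 ≤ 1 + 2 * α) {a b : ℝ}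
    (ha : 0 ≤ a) (hab : a ≤ b) :
    Gfun p α lam b - Gfun p α lam a ≤ 2 / p * (b ^ (p / 2) - a ^ (p / 2)) := by
  have hb : 0 ≤ b := ha.trans hab
  calc Gfun p α lam b - Gfun p α lam a
      = ∫ ω in a..b, ω ^ ((p - 1 + 2 * α) / 2) / (ω + lam) ^ ((1 + 2 * α) / 2) :=
        Gfun_sub_Gfun hp hlam hα ha hb
    _ ≤ ∫ ω in a..b, ω ^ (p / 2 - 1) :=
        integral_mono_on_of_le_Ioo hab (intervalIntegrable_Gfun_integrand hp hlam hα ha hb)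
          (intervalIntegrable_rpow' (by linarith)) fun ω hω => by
            convert rpow_add_div_add_rpow_le (ha.trans_lt hω.1) hlam
              (by linarith : 0 ≤ (1 + 2 * α) / 2) using 3
            ring
    _ = 2 / p * (b ^ (p / 2) - a ^ (p / 2)) := by
        rw [integral_rpow (.inl (by linarith)), sub_add_cancel]
        field_simp

lemma Gfun_zero : Gfun p α lam 0 = 0 := integral_same

lemma Gfun_nonneg (hp : 0 < p) (hlam : 0 ≤ lam) (hα : 0 ≤ 1 + 2 * α) {t : ℝ} (ht : 0 ≤ t) :
    0 ≤ Gfun p α lam t :=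
  Gfun_zero.symm.trans_le (Gfun_le_Gfun hp hlam hα le_rfl ht)

lemma Gfun_le (hp : 0 < p) (hlam : 0 ≤ lam) (hα : 0 ≤ 1 + 2 * α) {t : ℝ} (ht : 0 ≤ t) :
    Gfun p α lam t ≤ 2 / p * t ^ (p / 2) := by
  simpa [Gfun_zero, Real.zero_rpow (by positivity : p / 2 ≠ 0)] using
    Gfun_sub_Gfun_le hp hlam hα le_rfl ht

lemma abs_Gfun_sub_Gfun_le (hp : 0 < p) (hlam : 0 ≤ lam) (hα : 0 ≤ 1 + 2 * α) {a b : ℝ}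
    (ha : 0 ≤ a) (hb : 0 ≤ b) :
    |Gfun p α lam b - Gfun p α lam a| ≤ 2 / p * |b ^ (p / 2) - a ^ (p / 2)| := by
  wlog hab : a ≤ b generalizing a b
  · rw [abs_sub_comm, abs_sub_comm (b ^ _)]
    exact this hb ha (le_of_not_ge hab)
  rw [abs_of_nonneg (sub_nonneg.2 (Gfun_le_Gfun hp hlam hα ha hab)),
    abs_of_nonneg (sub_nonneg.2 (Real.rpow_le_rpow ha hab (by positivity)))]
  exact Gfun_sub_Gfun_le hp hlam hα ha hab

end Gfun

section NormedSpace

variable {E : Type*} [NormedAddCommGroup E] [NormedSpace ℝ E] {x y : E}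

lemma norm_inv_norm_smul_sub_inv_norm_smul_le (hx : x ≠ 0) (hxy : ‖x‖ ≤ ‖y‖) :
    ‖‖x‖⁻¹ • x - ‖y‖⁻¹ • y‖ ≤ 2 / ‖y‖ * ‖x - y‖ := by
  have hx' : 0 < ‖x‖ := norm_pos_iff.2 hx
  have hy : 0 < ‖y‖ := hx'.trans_le hxy
  have hcoef : 0 ≤ ‖x‖⁻¹ - ‖y‖⁻¹ := sub_nonneg.2 (inv_anti₀ hx' hxy)
  calc ‖‖x‖⁻¹ • x - ‖y‖⁻¹ • y‖ = ‖‖y‖⁻¹ • (x - y) + (‖x‖⁻¹ - ‖y‖⁻¹) • x‖ := by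
        rw [smul_sub, sub_smul]; abel_nf
    _ ≤ ‖y‖⁻¹ * ‖x - y‖ + (‖x‖⁻¹ - ‖y‖⁻¹) * ‖x‖ := by
        refine (norm_add_le _ _).trans_eq ?_
        rw [norm_smul, norm_smul, Real.norm_of_nonneg (by positivity), Real.norm_of_nonneg hcoef]
    _ = ‖y‖⁻¹ * ‖x - y‖ + ‖y‖⁻¹ * (‖y‖ - ‖x‖) := by field_simp
    _ ≤ ‖y‖⁻¹ * ‖x - y‖ + ‖y‖⁻¹ * ‖x - y‖ := by
        gcongr
        rw [norm_sub_rev]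
        exact norm_sub_norm_le y x
    _ = 2 / ‖y‖ * ‖x - y‖ := by ring

lemma norm_div_norm_smul_sub_div_norm_smul_le (hx : x ≠ 0) (hxy : ‖x‖ ≤ ‖y‖) {f g : ℝ}
    (hf : 0 ≤ f) : ‖(g / ‖x‖) • x - (f / ‖y‖) • y‖ ≤ |f - g| + 2 * f / ‖y‖ * ‖x - y‖ := by
  have hx' : ‖x‖ ≠ 0 := norm_ne_zero_iff.2 hx
  calc ‖(g / ‖x‖) • x - (f / ‖y‖) • y‖
      = ‖((g - f) / ‖x‖) • x + f • (‖x‖⁻¹ • x - ‖y‖⁻¹ • y)‖ := by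
        simp only [smul_sub, smul_smul, div_eq_mul_inv, sub_mul, sub_smul]; abel_nf
    _ ≤ |f - g| + f * (2 / ‖y‖ * ‖x - y‖) := by
        refine (norm_add_le _ _).trans (add_le_add (le_of_eq ?_) ?_)
        · rw [norm_smul, norm_div, norm_norm, div_mul_cancel₀ _ hx', Real.norm_eq_abs,
            abs_sub_comm]
        · rw [norm_smul, Real.norm_of_nonneg hf]
          exact mul_le_mul_of_nonneg_left (norm_inv_norm_smul_sub_inv_norm_smul_le hx hxy) hf
    _ = |f - g| + 2 * f / ‖y‖ * ‖x - y‖ := by ring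

end NormedSpace

section Euclidean

variable {n : ℕ} {ξ : EuclideanSpace ℝ (Fin n)}

lemma norm_Hfun_of_ne_zero (lam γ : ℝ) (hξ : ξ ≠ 0) :
    ‖Hfun n lam γ ξ‖ = max (‖ξ‖ - lam) 0 ^ γ := by
  rw [Hfun, if_neg hξ, norm_smul, Real.norm_of_nonneg (by positivity),
    div_mul_cancel₀ _ (norm_ne_zero_iff.2 hξ)]

lemma Vfun_of_lt (p α : ℝ) {lam : ℝ} (h : lam < ‖ξ‖) :
    Vfun n p α lam ξ = (Gfun p α lam (‖ξ‖ - lam) / ‖ξ‖) • ξ := by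
  rw [Vfun, if_pos h, max_eq_left (by linarith)]

end Euclidean

theorem V_diff_intermediate_bound (n : ℕ) (p lam α : ℝ) (hp : 2 ≤ p) (hlam : 0 ≤ lam)
    (hα : 0 ≤ α) (ξ η : EuclideanSpace ℝ (Fin n)) (h1 : ‖ξ‖ ≤ ‖η‖) (h2 : lam < ‖ξ‖) :
    ‖Vfun n p α lam ξ - Vfun n p α lam η‖ ≤
      (2 / p) * |‖Hfun n lam (p / 2) η‖ - ‖Hfun n lam (p / 2) ξ‖| +
        4 * (‖η‖ - lam) ^ (p / 2) / (p * ‖η‖) * ‖ξ - η‖ := by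
  have hη : lam < ‖η‖ := h2.trans_le h1
  have hξ0 : ξ ≠ 0 := norm_pos_iff.1 (hlam.trans_lt h2)
  have hη0 : η ≠ 0 := norm_pos_iff.1 (hlam.trans_lt hη)
  have hp0 : 0 < p := by linarith
  have hα' : 0 ≤ 1 + 2 * α := by linarith
  rw [Vfun_of_lt p α h2, Vfun_of_lt p α hη, norm_Hfun_of_ne_zero lam _ hξ0,
    norm_Hfun_of_ne_zero lam _ hη0, max_eq_left (by linarith), max_eq_left (by linarith)]
  have ha : 0 ≤ ‖ξ‖ - lam := by linarith
  have hb : 0 ≤ ‖η‖ - lam := by linarith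
  calc _ ≤ |Gfun p α lam (‖η‖ - lam) - Gfun p α lam (‖ξ‖ - lam)|
          + 2 * Gfun p α lam (‖η‖ - lam) / ‖η‖ * ‖ξ - η‖ :=
        norm_div_norm_smul_sub_div_norm_smul_le hξ0 h1 (Gfun_nonneg hp0 hlam hα' hb)
    _ ≤ 2 / p * |(‖η‖ - lam) ^ (p / 2) - (‖ξ‖ - lam) ^ (p / 2)|
          + 2 * (2 / p * (‖η‖ - lam) ^ (p / 2)) / ‖η‖ * ‖ξ - η‖ := by
        gcongr
        · exact abs_Gfun_sub_Gfun_le hp0 hlam hα' ha hb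
        · exact Gfun_le hp0 hlam hα' hb
    _ = _ := by ring
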